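/- arXiv:2410.14454 — 3 statements merged into one kernel-verified Lean document; each statement's English description precedes it below -/
import Mathlib

section
/- Let a1, r, u be arbitrary polynomials in ℚ[x]. Define q = (1/2)·u·r, a2 = a1·r, and a3 = a1^2·u·r + a1 + u. Then the polynomial Diophantine equation −2q − 2a2 + a1·r + a3·r − 2q·a1·a2 + a1·a2·a3·r − a2^2·a3 = 0 holds identically in ℚ[x]. -/
open Polynomial

/-- Lemma 3.1: the explicit solution of the polynomial Diophantine equation. -/
theorem diophantine_solution (a1 r u : ℚ[X]) :
    let q : ℚ[X] := C (1/2 : ℚ) * u * r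
    let a2 : ℚ[X] := a1 * r
    let a3 : ℚ[X] := a1 ^ 2 * u * r + a1 + u;
    -2 * q - 2 * a2 + a1 * r + a3 * r - 2 * q * a1 * a2 + a1 * a2 * a3 * r - a2 ^ 2 * a3
      = 0 := by
  intro q a2 a3
  have h : (C (1/2 : ℚ)) * 2 = 1 := by
    rw [← C_1, ← map_ofNat C 2, ← C_mul]
    norm_num
  linear_combination (-(u*r) - u*r^2*a1^2) * h
end

section
/- Let α, β ≥ 1 and γ ≥ 0 be integers, and let a1, r, u be nonzero polynomials in ℚ[x] with deg a1 = α, deg r = β, deg u = γ. Then the polynomial f = r^2·(u·(a1^2·r + 1) + a1)^2 + 4·(u·a1·r^2 + r) has degree 4α + 4β + 2γ, and its leading coefficient equals (a1.leadingCoeff^2 · r.leadingCoeff^2 · u.leadingCoeff)^2; in particular, the leading coefficient of f is a square in ℚ. Consequently, if 2α + 2β + γ = g + 1 for an integer g, then deg f = 2g + 2. -/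
open Polynomial

/-- Degree and leading-coefficient computation for the defining polynomial
`f = r²(u(a1²r+1)+a1)² + 4(u·a1·r² + r)` of the hyperelliptic curves of
Theorem 3.2. -/
theorem curve_polynomial_degree (α β γ : ℕ) (hα : 1 ≤ α) (hβ : 1 ≤ β)
    (a1 r u : ℚ[X]) (ha1 : a1 ≠ 0) (hr : r ≠ 0) (hu : u ≠ 0)
    (hda1 : a1.natDegree = α) (hdr : r.natDegree = β) (hdu : u.natDegree = γ) :
    let f : ℚ[X] :=
      r ^ 2 * (u * (a1 ^ 2 * r + 1) + a1) ^ 2 + 4 * (u * a1 * r ^ 2 + r)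
    f.natDegree = 4 * α + 4 * β + 2 * γ ∧
    f.leadingCoeff = (a1.leadingCoeff ^ 2 * r.leadingCoeff ^ 2 * u.leadingCoeff) ^ 2 ∧
    IsSquare f.leadingCoeff ∧
    ∀ g : ℕ, 2 * α + 2 * β + γ = g + 1 → f.natDegree = 2 * g + 2 := by
  intro f
  have ha1' : a1.leadingCoeff ≠ 0 := leadingCoeff_ne_zero.mpr ha1
  have hr' : r.leadingCoeff ≠ 0 := leadingCoeff_ne_zero.mpr hr
  have hu' : u.leadingCoeff ≠ 0 := leadingCoeff_ne_zero.mpr hu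
  -- p1 = a1^2 * r
  have hp1 : a1 ^ 2 * r ≠ 0 := mul_ne_zero (pow_ne_zero _ ha1) hr
  have hdp1 : (a1 ^ 2 * r).natDegree = 2 * α + β := by
    rw [natDegree_mul (pow_ne_zero _ ha1) hr, natDegree_pow, hda1, hdr]
  have hlp1 : (a1 ^ 2 * r).leadingCoeff = a1.leadingCoeff ^ 2 * r.leadingCoeff := by
    rw [leadingCoeff_mul, leadingCoeff_pow]
  -- p2 = a1^2 * r + 1
  have hlt1 : (1 : ℚ[X]).natDegree < (a1 ^ 2 * r).natDegree := by
    rw [natDegree_one, hdp1]; omega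
  have hdp2 : (a1 ^ 2 * r + 1).natDegree = 2 * α + β := by
    rw [natDegree_add_eq_left_of_natDegree_lt hlt1, hdp1]
  have hlp2 : (a1 ^ 2 * r + 1).leadingCoeff = a1.leadingCoeff ^ 2 * r.leadingCoeff := by
    rw [leadingCoeff_add_of_degree_lt' (degree_lt_degree hlt1), hlp1]
  have hp2 : a1 ^ 2 * r + 1 ≠ 0 := by
    intro h
    rw [h, leadingCoeff_zero] at hlp2
    exact mul_ne_zero (pow_ne_zero 2 ha1') hr' hlp2.symm
  -- A = u * p2 + a1
  have hdup2 : (u * (a1 ^ 2 * r + 1)).natDegree = γ + (2 * α + β) := by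
    rw [natDegree_mul hu hp2, hdu, hdp2]
  have hltA : a1.natDegree < (u * (a1 ^ 2 * r + 1)).natDegree := by
    rw [hda1, hdup2]; omega
  have hdA : (u * (a1 ^ 2 * r + 1) + a1).natDegree = γ + (2 * α + β) := by
    rw [natDegree_add_eq_left_of_natDegree_lt hltA, hdup2]
  have hlA : (u * (a1 ^ 2 * r + 1) + a1).leadingCoeff
      = u.leadingCoeff * (a1.leadingCoeff ^ 2 * r.leadingCoeff) := by
    rw [leadingCoeff_add_of_degree_lt' (degree_lt_degree hltA), leadingCoeff_mul, hlp2]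
  have hA : u * (a1 ^ 2 * r + 1) + a1 ≠ 0 := by
    rw [← leadingCoeff_ne_zero, hlA]
    exact mul_ne_zero hu' (mul_ne_zero (pow_ne_zero _ ha1') hr')
  -- T1 = r^2 * A^2
  have hT1ne : r ^ 2 * (u * (a1 ^ 2 * r + 1) + a1) ^ 2 ≠ 0 :=
    mul_ne_zero (pow_ne_zero _ hr) (pow_ne_zero _ hA)
  have hdT1 : (r ^ 2 * (u * (a1 ^ 2 * r + 1) + a1) ^ 2).natDegree
      = 4 * α + 4 * β + 2 * γ := by
    rw [natDegree_mul (pow_ne_zero _ hr) (pow_ne_zero _ hA), natDegree_pow, natDegree_pow,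
      hdr, hdA]; ring
  have hlT1 : (r ^ 2 * (u * (a1 ^ 2 * r + 1) + a1) ^ 2).leadingCoeff
      = (a1.leadingCoeff ^ 2 * r.leadingCoeff ^ 2 * u.leadingCoeff) ^ 2 := by
    rw [leadingCoeff_mul, leadingCoeff_pow, leadingCoeff_pow, hlA]; ring
  -- T2 = 4 * (u * a1 * r^2 + r)
  have hdT2 : (4 * (u * a1 * r ^ 2 + r)).natDegree < 4 * α + 4 * β + 2 * γ := by
    calc (4 * (u * a1 * r ^ 2 + r)).natDegree
        ≤ (4 : ℚ[X]).natDegree + (u * a1 * r ^ 2 + r).natDegree := natDegree_mul_le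
      _ ≤ 0 + max (u * a1 * r ^ 2).natDegree r.natDegree := by
          rw [natDegree_ofNat]
          exact add_le_add le_rfl (natDegree_add_le _ _)
      _ ≤ 0 + max (u.natDegree + a1.natDegree + (r ^ 2).natDegree) r.natDegree := by
          gcongr
          exact natDegree_mul_le.trans (add_le_add natDegree_mul_le le_rfl)
      _ < 4 * α + 4 * β + 2 * γ := by
          rw [natDegree_pow, hdu, hda1, hdr]; simp; omega
  -- conclusion
  have hdf : f.natDegree = 4 * α + 4 * β + 2 * γ := by
    rw [show f = _ + _ from rfl, natDegree_add_eq_left_of_natDegree_lt (by rw [hdT1]; exact hdT2),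
      hdT1]
  have hlf : f.leadingCoeff = (a1.leadingCoeff ^ 2 * r.leadingCoeff ^ 2 * u.leadingCoeff) ^ 2 := by
    rw [show f = _ + _ from rfl,
      leadingCoeff_add_of_degree_lt' (degree_lt_degree (by rw [hdT1]; exact hdT2)), hlT1]
  refine ⟨hdf, hlf, ⟨_, by rw [hlf, sq]⟩, fun g hg => by omega⟩
end

section
/- For every rational number t such that (1 + t)·(5 + 5t + 4t^3) ≠ 0, the polynomial f_t(x) = (2(x^2 + t)^2 + (x^2 + t) + 1)^2 + 4·(2(x^2 + t) + 1) in ℚ[x] has degree 8 and is squarefree. -/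
open Polynomial

/-- Example 3.5: for `(1+t)(5+5t+4t³) ≠ 0`, the defining polynomial of the
genus 3 curve `C_t` has degree 8 and is squarefree. -/
theorem example_genus3_smooth (t : ℚ) (ht : (1 + t) * (5 + 5 * t + 4 * t ^ 3) ≠ 0) :
    ((2 * (X ^ 2 + C t) ^ 2 + (X ^ 2 + C t) + 1) ^ 2
        + 4 * (2 * (X ^ 2 + C t) + 1) : ℚ[X]).natDegree = 8 ∧
    Squarefree ((2 * (X ^ 2 + C t) ^ 2 + (X ^ 2 + C t) + 1) ^ 2
        + 4 * (2 * (X ^ 2 + C t) + 1) : ℚ[X]) := by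
  set f : ℚ[X] := (2 * (X ^ 2 + C t) ^ 2 + (X ^ 2 + C t) + 1) ^ 2
        + 4 * (2 * (X ^ 2 + C t) + 1) with hf
  have hdeg : f.natDegree = 8 := by
    rw [hf]; compute_degree!
  refine ⟨hdeg, ?_⟩
  -- derivative
  have hd : derivative f = 4 * X *
      (8 * (X ^ 2 + C t) ^ 3 + 6 * (X ^ 2 + C t) ^ 2 + 5 * (X ^ 2 + C t) + 5) := by
    rw [hf]
    simp only [derivative_add, derivative_mul, derivative_pow, derivative_X,
      derivative_C, derivative_one, derivative_ofNat, derivative_X_pow, map_ofNat, map_one, map_natCast, Nat.cast_ofNat]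
    ring
  have hsep : f.Separable := by
    rw [Polynomial.separable_def, hd]
    have h4 : IsCoprime f (4 : ℚ[X]) := by
      refine ⟨0, C (4⁻¹ : ℚ), ?_⟩
      rw [zero_mul, zero_add, show (4 : ℚ[X]) = C (4:ℚ) from (map_ofNat C 4).symm, ← C_mul]
      norm_num
    have hX : IsCoprime f X := by
      set s : ℚ[X] := 4 * ((X ^ 2 + C t) ^ 3 + (X ^ 2 + C t) ^ 2 * C t
            + (X ^ 2 + C t) * C t ^ 2 + C t ^ 3)
          + 4 * ((X ^ 2 + C t) ^ 2 + (X ^ 2 + C t) * C t + C t ^ 2)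
          + 5 * ((X ^ 2 + C t) + C t) + 10 with hs
      have hfs : f = X ^ 2 * s + C ((1 + t) * (5 + 5 * t + 4 * t ^ 3)) := by
        have : (C ((1 + t) * (5 + 5 * t + 4 * t ^ 3)) : ℚ[X])
            = (1 + C t) * (5 + 5 * C t + 4 * C t ^ 3) := by
          simp [map_mul, map_add, map_pow, map_ofNat]
        rw [this, hf, hs]; ring
      refine ⟨C ((1 + t) * (5 + 5 * t + 4 * t ^ 3))⁻¹,
        -(C ((1 + t) * (5 + 5 * t + 4 * t ^ 3))⁻¹ * X * s), ?_⟩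
      calc C ((1 + t) * (5 + 5 * t + 4 * t ^ 3))⁻¹ * f
            + -(C ((1 + t) * (5 + 5 * t + 4 * t ^ 3))⁻¹ * X * s) * X
          = C ((1 + t) * (5 + 5 * t + 4 * t ^ 3))⁻¹ * (f - X ^ 2 * s) := by ring
        _ = C ((1 + t) * (5 + 5 * t + 4 * t ^ 3))⁻¹
            * C ((1 + t) * (5 + 5 * t + 4 * t ^ 3)) := by rw [hfs]; ring_nf
        _ = 1 := by rw [← C_mul, inv_mul_cancel₀ ht, C_1]
    have hP : IsCoprime f
        (8 * (X ^ 2 + C t) ^ 3 + 6 * (X ^ 2 + C t) ^ 2 + 5 * (X ^ 2 + C t) + 5) := by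
      set h : ℚ[X] := X ^ 2 + C t with hh
      have key : (-52 * h ^ 2 + 3 * h - 36) * f
          + (26 * h ^ 3 + 5 * h ^ 2 + 29 * h + 40)
            * (8 * h ^ 3 + 6 * h ^ 2 + 5 * h + 5) = 20 := by
        rw [hf, hh]; ring
      refine ⟨C (20⁻¹ : ℚ) * (-52 * h ^ 2 + 3 * h - 36),
        C (20⁻¹ : ℚ) * (26 * h ^ 3 + 5 * h ^ 2 + 29 * h + 40), ?_⟩
      calc C (20⁻¹ : ℚ) * (-52 * h ^ 2 + 3 * h - 36) * f
            + C (20⁻¹ : ℚ) * (26 * h ^ 3 + 5 * h ^ 2 + 29 * h + 40)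
              * (8 * h ^ 3 + 6 * h ^ 2 + 5 * h + 5)
          = C (20⁻¹ : ℚ) * ((-52 * h ^ 2 + 3 * h - 36) * f
            + (26 * h ^ 3 + 5 * h ^ 2 + 29 * h + 40)
              * (8 * h ^ 3 + 6 * h ^ 2 + 5 * h + 5)) := by ring
        _ = C (20⁻¹ : ℚ) * 20 := by rw [key]
        _ = 1 := by
            rw [show (20 : ℚ[X]) = C (20:ℚ) from (map_ofNat C 20).symm, ← C_mul]; norm_num
    exact (h4.mul_right hX).mul_right hP
  exact hsep.squarefree
end
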